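/- Let N ∈ ℕ, let L : ℂ^N → ℂ^N be a Hermitian (self-adjoint) linear map, β ∈ ℝ, C₀ > 0, ρ(ψ) = √(Σ_j |ψ_j|⁴ + C₀). Let u : ℝ → ℂ^N and q : ℝ → ℝ be differentiable and satisfy the Lawson-transformed SAV system: for all t, u'(t) = −i • exp(i t L) ((β q t / ρ(v t)) • (|v t|²(v t))) and q'(t) = (2 / ρ(v t)) * Re⟨−i • (L (v t)), |v t|²(v t)⟩, where v t := exp(−i t L) (u t). Then both t ↦ ⟨u t, u t⟩ and t ↦ Re⟨L (u t), u t⟩ + (β/2) (q t)² are constant in t. -/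

import Mathlib

open Finset Complex

/-- The componentwise cubic nonlinearity `|ψ|²ψ`. -/
noncomputable def nlVec {N : ℕ} (ψ : EuclideanSpace ℂ (Fin N)) : EuclideanSpace ℂ (Fin N) :=
  WithLp.toLp 2 (fun j => (‖ψ j‖ : ℂ) ^ 2 * ψ j)

/-- The inner product `⟨x, y⟩ = ∑ j, x j * conj (y j)` of the paper. -/
noncomputable def pInner {N : ℕ} (x y : EuclideanSpace ℂ (Fin N)) : ℂ :=
  ∑ j, x j * (starRingEnd ℂ) (y j)

/-- The SAV denominator `ρ(ψ) = √(∑ j |ψ j|⁴ + C₀)`. -/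
noncomputable def savRho {N : ℕ} (C₀ : ℝ) (ψ : EuclideanSpace ℂ (Fin N)) : ℝ :=
  Real.sqrt ((∑ j, ‖ψ j‖ ^ 4) + C₀)

/-!
Since `L` is self-adjoint, `exp (i t L)` is unitary and commutes with `L`. Writing
`u t = exp (i t L) (v t)` and `u' = -i exp (i t L) w`, the derivative of `Re ⟪S u, u⟫` for
`S = 1` or `S = L` is therefore `2 Im ⟪S v, w⟫` with `w = (β q / ρ) |v|²v`. For `S = 1` this
vanishes because `⟪v, |v|²v⟫ = ∑ |v_j|⁴` is real; for `S = L` it equals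
`2 (β q / ρ) Im ⟪L v, |v|²v⟫`, which the equation for `q` makes exactly `-(β/2) (q²)'`.
-/

open scoped InnerProductSpace

lemma exp_smul_apply_exp_neg_smul_apply {F : Type*} [NormedAddCommGroup F] [NormedSpace ℂ F]
    [CompleteSpace F] (T : F →L[ℂ] F) (z : ℂ) (x : F) :
    NormedSpace.exp (z • T) (NormedSpace.exp ((-z) • T) x) = x := by
  let +nondep : NormedAlgebra ℚ (F →L[ℂ] F) := .restrictScalars ℚ ℂ _
  have h : NormedSpace.exp (z • T) * NormedSpace.exp ((-z) • T) = 1 := by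
    rw [neg_smul, ← NormedSpace.exp_add_of_commute (Commute.refl _).neg_right, add_neg_cancel,
      NormedSpace.exp_zero]
  exact congr($h x)

section InteractionPicture

variable {E : Type*} [NormedAddCommGroup E] [InnerProductSpace ℂ E] [CompleteSpace E]
  {S T : E →L[ℂ] E}

lemma IsSelfAdjoint.hasDerivAt_re_inner_apply_self (hS : IsSelfAdjoint S) {u : ℝ → E}
    {u' : E} {t : ℝ} (hu : HasDerivAt u u' t) :
    HasDerivAt (fun t ↦ re ⟪S (u t), u t⟫_ℂ) (2 * re ⟪S (u t), u'⟫_ℂ) t := by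
  have hSu : HasDerivAt (fun t ↦ S (u t)) (S u') t :=
    (S.restrictScalars ℝ).hasFDerivAt.comp_hasDerivAt t hu
  refine (reCLM.hasFDerivAt.comp_hasDerivAt t (hSu.inner ℂ hu)).congr_deriv ?_
  have hsymm : ⟪S u', u t⟫_ℂ = ⟪u', S (u t)⟫_ℂ := hS.isSymmetric u' (u t)
  rw [reCLM_apply, add_re, hsymm, ← inner_conj_symm, conj_re]
  ring

lemma IsSelfAdjoint.exp_I_mul_smul_mem_unitary (hT : IsSelfAdjoint T) (t : ℝ) :
    NormedSpace.exp ((I * t) • T) ∈ unitary (E →L[ℂ] E) := by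
  let +nondep : NormedAlgebra ℚ (E →L[ℂ] E) := .restrictScalars ℚ ℂ _
  refine NormedSpace.exp_mem_unitary_of_mem_skewAdjoint (hT.smul_mem_skewAdjoint ?_)
  simp [skewAdjoint.mem_iff]

lemma IsSelfAdjoint.inner_apply_exp_I_mul_smul (hT : IsSelfAdjoint T) (hST : Commute S T)
    (t : ℝ) (x y : E) :
    ⟪S (NormedSpace.exp ((I * t) • T) x), NormedSpace.exp ((I * t) • T) y⟫_ℂ =
      ⟪S x, y⟫_ℂ := by
  have hcomm : S (NormedSpace.exp ((I * t) • T) x) = NormedSpace.exp ((I * t) • T) (S x) :=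
    congr($((hST.smul_right _).exp_right) x)
  rw [hcomm, ContinuousLinearMap.inner_map_map_of_mem_unitary (hT.exp_I_mul_smul_mem_unitary t)]

lemma IsSelfAdjoint.hasDerivAt_re_inner_apply_self_of_interaction (hT : IsSelfAdjoint T)
    (hS : IsSelfAdjoint S) (hST : Commute S T) {u : ℝ → E} {x w : E} {t : ℝ}
    (hux : u t = NormedSpace.exp ((I * t) • T) x)
    (hu : HasDerivAt u (-I • NormedSpace.exp ((I * t) • T) w) t) :
    HasDerivAt (fun t ↦ re ⟪S (u t), u t⟫_ℂ) (2 * im ⟪S x, w⟫_ℂ) t := by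
  refine (hS.hasDerivAt_re_inner_apply_self hu).congr_deriv ?_
  rw [hux, inner_smul_right, hT.inner_apply_exp_I_mul_smul hST, neg_mul, neg_re, I_mul_re,
    neg_neg]

end InteractionPicture

lemma pInner_eq_inner {N : ℕ} (x y : EuclideanSpace ℂ (Fin N)) :
    pInner x y = ⟪y, x⟫_ℂ := by
  simp [pInner, PiLp.inner_apply]

lemma re_pInner {N : ℕ} (x y : EuclideanSpace ℂ (Fin N)) :
    (pInner x y).re = re ⟪x, y⟫_ℂ := by
  rw [pInner_eq_inner, ← inner_conj_symm, conj_re]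

lemma ofReal_re_pInner_self {N : ℕ} (x : EuclideanSpace ℂ (Fin N)) :
    ((pInner x x).re : ℂ) = pInner x x := by
  rw [pInner_eq_inner]
  exact inner_self_ofReal_re x

lemma isSelfAdjoint_of_pInner {N : ℕ}
    {L : EuclideanSpace ℂ (Fin N) →L[ℂ] EuclideanSpace ℂ (Fin N)}
    (hL : ∀ x y, pInner (L x) y = pInner x (L y)) : IsSelfAdjoint L :=
  ContinuousLinearMap.isSelfAdjoint_iff_isSymmetric.mpr fun x y ↦
    (by simpa only [pInner_eq_inner] using (hL y x).symm : ⟪L x, y⟫_ℂ = ⟪x, L y⟫_ℂ)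

lemma inner_nlVec {N : ℕ} (ψ : EuclideanSpace ℂ (Fin N)) :
    ⟪ψ, nlVec ψ⟫_ℂ = ((∑ j, ‖ψ j‖ ^ 4 : ℝ) : ℂ) := by
  simp only [PiLp.inner_apply, RCLike.inner_apply, nlVec, ofReal_sum, ofReal_pow]
  refine Finset.sum_congr rfl fun j _ ↦ ?_
  rw [mul_assoc, mul_conj, normSq_eq_norm_sq]
  push_cast
  ring

theorem Lawson_system_conservation_general {N : ℕ}
    (L : EuclideanSpace ℂ (Fin N) →L[ℂ] EuclideanSpace ℂ (Fin N))
    (hL : ∀ x y, pInner (L x) y = pInner x (L y))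
    (β : ℝ) (C₀ : ℝ)
    (u : ℝ → EuclideanSpace ℂ (Fin N)) (q : ℝ → ℝ)
    (hu : Differentiable ℝ u) (hq : Differentiable ℝ q)
    (v : ℝ → EuclideanSpace ℂ (Fin N))
    (hv : ∀ t, v t = NormedSpace.exp (((-Complex.I) * (t : ℂ)) • L) (u t))
    (hode₁ : ∀ t, deriv u t = (-Complex.I) •
        NormedSpace.exp ((Complex.I * (t : ℂ)) • L)
          (((β * q t / savRho C₀ (v t) : ℝ) : ℂ) • nlVec (v t)))
    (hode₂ : ∀ t, deriv q t =
        (2 / savRho C₀ (v t)) * (pInner ((-Complex.I) • L (v t)) (nlVec (v t))).re) :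
    (∀ t₁ t₂ : ℝ, pInner (u t₁) (u t₁) = pInner (u t₂) (u t₂)) ∧
    (∀ t₁ t₂ : ℝ,
      (pInner (L (u t₁)) (u t₁)).re + (β / 2) * (q t₁) ^ 2
        = (pInner (L (u t₂)) (u t₂)).re + (β / 2) * (q t₂) ^ 2) := by
  have hLsa := isSelfAdjoint_of_pInner hL
  have huv : ∀ t : ℝ, u t = NormedSpace.exp ((I * t) • L) (v t) := fun t ↦ by
    rw [hv, neg_mul, exp_smul_apply_exp_neg_smul_apply]
  have hu' : ∀ t, HasDerivAt u _ t := fun t ↦ hode₁ t ▸ (hu t).hasDerivAt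
  refine ⟨fun t₁ t₂ ↦ ?_, fun t₁ t₂ ↦ ?_⟩
  · have hmass : ∀ t, HasDerivAt (fun t ↦ re ⟪u t, u t⟫_ℂ) 0 t := fun t ↦ by
      refine (hLsa.hasDerivAt_re_inner_apply_self_of_interaction (IsSelfAdjoint.one _)
        (Commute.one_left L) (huv t) (hu' t)).congr_deriv ?_
      rw [one_apply_eq_self, inner_smul_right, inner_nlVec, ← ofReal_mul, ofReal_im, mul_zero]
    rw [← ofReal_re_pInner_self (u t₁), ← ofReal_re_pInner_self (u t₂), re_pInner, re_pInner,
      is_const_of_deriv_eq_zero (fun t ↦ (hmass t).differentiableAt)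
        (fun t ↦ (hmass t).deriv)]
  · have henergy : ∀ t, HasDerivAt (fun t ↦ re ⟪L (u t), u t⟫_ℂ + β / 2 * q t ^ 2) 0 t :=
      fun t ↦ by
      refine ((hLsa.hasDerivAt_re_inner_apply_self_of_interaction hLsa (Commute.refl L) (huv t)
        (hu' t)).add (((hq t).hasDerivAt.pow 2).const_mul (β / 2))).congr_deriv ?_
      rw [hode₂, re_pInner, inner_smul_right, inner_smul_left, im_ofReal_mul, map_neg, conj_I,
        neg_neg, I_mul_re]
      push_cast
      ring
    rw [re_pInner, re_pInner]
    exact is_const_of_deriv_eq_zero (fun t ↦ (henergy t).differentiableAt)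
      (fun t ↦ (henergy t).deriv) t₁ t₂

/-- Conservation laws (10) and (11) of the Lawson-transformed SAV system (9): along any
solution `(u, q)`, both the mass `⟨u, u⟩` and the modified energy
`Re⟨Lu, u⟩ + (β/2) q²` are constant in `t`. -/
theorem Lawson_system_conservation {N : ℕ}
    (L : EuclideanSpace ℂ (Fin N) →L[ℂ] EuclideanSpace ℂ (Fin N))
    (hL : ∀ x y, pInner (L x) y = pInner x (L y))
    (β : ℝ) (C₀ : ℝ) (hC₀ : 0 < C₀)
    (u : ℝ → EuclideanSpace ℂ (Fin N)) (q : ℝ → ℝ)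
    (hu : Differentiable ℝ u) (hq : Differentiable ℝ q)
    (v : ℝ → EuclideanSpace ℂ (Fin N))
    (hv : ∀ t, v t = NormedSpace.exp (((-Complex.I) * (t : ℂ)) • L) (u t))
    (hode₁ : ∀ t, deriv u t = (-Complex.I) •
        NormedSpace.exp ((Complex.I * (t : ℂ)) • L)
          (((β * q t / savRho C₀ (v t) : ℝ) : ℂ) • nlVec (v t)))
    (hode₂ : ∀ t, deriv q t =
        (2 / savRho C₀ (v t)) * (pInner ((-Complex.I) • L (v t)) (nlVec (v t))).re) :
    (∀ t₁ t₂ : ℝ, pInner (u t₁) (u t₁) = pInner (u t₂) (u t₂)) ∧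
    (∀ t₁ t₂ : ℝ,
      (pInner (L (u t₁)) (u t₁)).re + (β / 2) * (q t₁) ^ 2
        = (pInner (L (u t₂)) (u t₂)).re + (β / 2) * (q t₂) ^ 2) :=
  Lawson_system_conservation_general L hL β C₀ u q hu hq v hv hode₁ hode₂
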